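/- arXiv:math/9612225 — 3 statements merged into one kernel-verified Lean document; each statement's English description precedes it below -/
import Mathlib

section
/- For every natural number n, the following identity of real numbers holds: ∑_{k=0}^{2n} (−1)^k · (C(2n,k) · C(2n+k+1,k) / C(4n+2k+2,2k)) · (3+2√2)^k = ((3/4)_n · (5/4)_n) / ((7/8)_n · (9/8)_n), where C(m,j) denotes the binomial coefficient. (Note the binomial coefficient C(4n+2k+2,2k) in the denominator is a positive integer, and (7/8)_n, (9/8)_n are positive reals, so both sides are well defined.) -/
/-- Rising factorial (Pochhammer symbol) `(z)_n` over the reals. -/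
noncomputable def poch (z : ℝ) (n : ℕ) : ℝ := (ascPochhammer ℝ n).eval z

lemma poch_zero (z : ℝ) : poch z 0 = 1 := by simp [poch]

lemma poch_succ (z : ℝ) (k : ℕ) : poch z (k+1) = poch z k * (z + k) := by
  simp [poch, ascPochhammer_succ_right]

lemma poch_add (z : ℝ) (a b : ℕ) : poch z (a+b) = poch z a * poch (z + a) b := by
  have h := ascPochhammer_mul ℝ a b
  have := congrArg (Polynomial.eval z) h
  simpa [poch, Polynomial.eval_comp] using this.symm

lemma poch_pos {z : ℝ} (hz : 0 < z) (k : ℕ) : 0 < poch z k := by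
  induction k with
  | zero => simp [poch_zero]
  | succ k ih => rw [poch_succ]; positivity

lemma poch_shift2 (z : ℝ) (k : ℕ) :
    poch z k * (z + k) * (z + k + 1) = z * (z+1) * poch (z+2) k := by
  have h1 : poch z (k+2) = poch z k * (z + k) * (z + k + 1) := by
    rw [show k+2 = (k+1)+1 from rfl, poch_succ, poch_succ]; push_cast; ring
  have h2 : poch z (2+k) = z * (z+1) * poch (z+2) k := by
    rw [poch_add]
    rw [show poch z 2 = z * (z+1) from by rw [show (2:ℕ) = 1+1 from rfl, poch_succ, poch_succ, poch_zero]; push_cast; ring]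
    norm_num
  rw [show 2+k = k+2 from by ring, h1] at h2
  exact h2

lemma poch_nat_neg (m k : ℕ) (h : m < k) : poch (-(m:ℝ)) k = 0 := by
  obtain ⟨j, rfl⟩ : ∃ j, k = (m+1) + j := ⟨k - (m+1), by omega⟩
  rw [poch_add, poch_succ]
  simp

noncomputable def Tc (n k : ℕ) : ℝ :=
  poch (-(2*(n:ℝ))) k * poch (1/2) k * (3 + 2*Real.sqrt 2)^k /
    (poch (2*(n:ℝ) + 3/2) k * (Nat.factorial k))

def Pc1 (v u : ℝ) : ℝ := -45*u - 150*u^2 + 60*u^3 - 126*v*u - 560*v*u^2 + 128*v*u^3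
  - 112*v^2*u - 672*v^2*u^2 + 64*v^2*u^3 - 32*v^3*u - 256*v^3*u^2
def Pc2 (v u : ℝ) : ℝ := 60*u + 90*u^2 - 60*u^3 + 188*v*u + 312*v*u^2 - 128*v*u^3
  + 192*v^2*u + 352*v^2*u^2 - 64*v^2*u^3 + 64*v^3*u + 128*v^3*u^2

noncomputable def Gc (n k : ℕ) : ℝ :=
  (Pc1 (n:ℝ) (k:ℝ) + Pc2 (n:ℝ) (k:ℝ) * Real.sqrt 2) *
    poch (-(2*(n:ℝ)) - 2) k * poch (1/2) k * (3 + 2*Real.sqrt 2)^k /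
    ((2*(n:ℝ)+1)*(2*(n:ℝ)+2)*(2*(k:ℝ)+4*(n:ℝ)+3) * poch (2*(n:ℝ) + 3/2) k * (Nat.factorial k))

set_option maxHeartbeats 4000000 in
lemma key (n k : ℕ) :
    (8*(n:ℝ)+7)*(8*(n:ℝ)+9) * Tc (n+1) k - 4*(4*(n:ℝ)+3)*(4*(n:ℝ)+5) * Tc n k
      = Gc n (k+1) - Gc n k := by
  have hs : Real.sqrt 2 ^ 2 = 2 := Real.sq_sqrt (by norm_num)
  set s := Real.sqrt 2 with hsdef
  set ν := (n:ℝ) with hν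
  set κ := (k:ℝ) with hκ
  have hν0 : 0 ≤ ν := Nat.cast_nonneg n
  have hκ0 : 0 ≤ κ := Nat.cast_nonneg k
  set A := poch (-(2*ν) - 2) k with hA
  set H := poch (1/2) k with hH
  set C := poch (2*ν + 3/2) k with hC
  set X := (3 + 2*s)^k with hX
  set f := ((Nat.factorial k : ℝ)) with hf
  have hC0 : C ≠ 0 := ne_of_gt (poch_pos (by linarith) k)
  have hf0 : f ≠ 0 := by
    rw [hf]; exact_mod_cast (Nat.factorial_pos k).ne'
  have d1 : (2*ν+3/2) ≠ 0 := by positivity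
  have d2 : (2*ν+5/2) ≠ 0 := by positivity
  have d3 : (2*ν+1) ≠ 0 := by positivity
  have d4 : (2*ν+2) ≠ 0 := by positivity
  have d5 : (2*κ+4*ν+3) ≠ 0 := by positivity
  have d6 : (2*κ+4*ν+5) ≠ 0 := by positivity
  have d7 : (2*ν+3/2+κ) ≠ 0 := by positivity
  have d8 : (2*ν+5/2+κ) ≠ 0 := by positivity
  have d9 : (κ+1) ≠ 0 := by positivity
  -- C' and A-link identities
  have hC' : poch (2*ν + 3/2 + 2) k = C * (2*ν+3/2+κ) * (2*ν+5/2+κ) / ((2*ν+3/2)*(2*ν+5/2)) := by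
    rw [eq_div_iff (by positivity)]
    have h := poch_shift2 (2*ν+3/2) k
    rw [← hC] at h
    linear_combination h.symm
  have hA2 : poch (-(2*ν)) k = A * (κ - 2*ν - 2) * (κ - 2*ν - 1) / ((2*ν+1)*(2*ν+2)) := by
    rw [eq_div_iff (by positivity)]
    have h := poch_shift2 (-(2*ν) - 2) k
    rw [show -(2*ν) - 2 + 2 = -(2*ν) from by ring, ← hA] at h
    linear_combination -h
  -- the four terms over common denominator
  have ht1 : (8*ν+7)*(8*ν+9) * Tc (n+1) k =
      ((8*ν+7)*(8*ν+9)*A*H*X*(2*ν+3/2)^2*(2*ν+5/2)^2*(2*ν+1)*(2*ν+2)*(2*κ+4*ν+3)*(2*κ+4*ν+5)*(κ+1)) /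
      ((2*ν+3/2)*(2*ν+5/2)*((2*ν+1)*(2*ν+2))*(2*κ+4*ν+3)*(2*κ+4*ν+5)*(2*ν+3/2+κ)*(2*ν+5/2+κ)*(κ+1)*C*f) := by
    unfold Tc
    push_cast
    rw [show -(2*(ν+1)) = -(2*ν) - 2 from by ring, show 2*(ν+1) + 3/2 = 2*ν+3/2+2 from by ring,
      hC', ← hA, ← hH, ← hX, ← hf]
    field_simp
  have ht2 : 4*(4*ν+3)*(4*ν+5) * Tc n k =
      (4*(4*ν+3)*(4*ν+5)*A*(κ-2*ν-2)*(κ-2*ν-1)*H*X*(2*ν+3/2)*(2*ν+5/2)*(2*κ+4*ν+3)*(2*κ+4*ν+5)*(2*ν+3/2+κ)*(2*ν+5/2+κ)*(κ+1)) /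
      ((2*ν+3/2)*(2*ν+5/2)*((2*ν+1)*(2*ν+2))*(2*κ+4*ν+3)*(2*κ+4*ν+5)*(2*ν+3/2+κ)*(2*ν+5/2+κ)*(κ+1)*C*f) := by
    unfold Tc
    rw [hA2, ← hH, ← hX, ← hC, ← hf]
    field_simp
  have ht4 : Gc n k =
      ((Pc1 ν κ + Pc2 ν κ * s)*A*H*X*(2*ν+3/2)*(2*ν+5/2)*(2*κ+4*ν+5)*(2*ν+3/2+κ)*(2*ν+5/2+κ)*(κ+1)) /
      ((2*ν+3/2)*(2*ν+5/2)*((2*ν+1)*(2*ν+2))*(2*κ+4*ν+3)*(2*κ+4*ν+5)*(2*ν+3/2+κ)*(2*ν+5/2+κ)*(κ+1)*C*f) := by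
    unfold Gc
    rw [← hA, ← hH, ← hX, ← hC, ← hf, ← hν, ← hκ, ← hsdef]
    field_simp
  have ht3 : Gc n (k+1) =
      (((3*Pc1 ν (κ+1) + 4*Pc2 ν (κ+1)) + (2*Pc1 ν (κ+1) + 3*Pc2 ν (κ+1))*s) *
        (A*(κ-2*ν-2)) * (H*(κ+1/2)) * X * ((2*ν+3/2)*(2*ν+5/2)*(2*κ+4*ν+3)*(2*ν+5/2+κ))) /
      ((2*ν+3/2)*(2*ν+5/2)*((2*ν+1)*(2*ν+2))*(2*κ+4*ν+3)*(2*κ+4*ν+5)*(2*ν+3/2+κ)*(2*ν+5/2+κ)*(κ+1)*C*f) := by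
    have ht3' : Gc n (k+1) =
        ((Pc1 ν (κ+1) + Pc2 ν (κ+1) * s) * (3+2*s)) * (A*(-(2*ν)-2+κ)) * (H*(1/2+κ)) * X /
        ((2*ν+1)*(2*ν+2)*(2*(κ+1)+4*ν+3) * (C*(2*ν+3/2+κ)) * (f*(κ+1))) := by
      unfold Gc
      rw [poch_succ, poch_succ, poch_succ, pow_succ, Nat.factorial_succ]
      push_cast
      rw [← hA, ← hH, ← hX, ← hC, ← hf, ← hν, ← hκ, ← hsdef]
      field_simp
    rw [ht3', div_eq_div_iff (by positivity) (by positivity)]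
    linear_combination (2 * Pc2 ν (κ+1) * (A*(κ-2*ν-2)) * (H*(κ+1/2)) * X *
      ((2*ν+3/2)*(2*ν+5/2)*((2*ν+1)*(2*ν+2))*(2*κ+4*ν+3)*(2*κ+4*ν+5)*(2*ν+3/2+κ)*(2*ν+5/2+κ)*(κ+1)*C*f)) * hs
  rw [ht1, ht2, ht3, ht4, div_sub_div_same, div_sub_div_same]
  congr 1
  simp only [Pc1, Pc2]
  ring

lemma Tc_vanish (n k : ℕ) (h : 2*n < k) : Tc n k = 0 := by
  unfold Tc
  rw [show -(2*(n:ℝ)) = -((2*n : ℕ):ℝ) from by push_cast; ring, poch_nat_neg (2*n) k h]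
  simp

lemma Gc_zero (n : ℕ) : Gc n 0 = 0 := by
  unfold Gc
  norm_num [Pc1, Pc2]

lemma Gc_top (n : ℕ) : Gc n (2*n+3) = 0 := by
  unfold Gc
  rw [show -(2*(n:ℝ)) - 2 = -((2*n+2 : ℕ):ℝ) from by push_cast; ring,
    poch_nat_neg (2*n+2) (2*n+3) (by omega)]
  simp

lemma recur (n : ℕ) :
    (8*(n:ℝ)+7)*(8*(n:ℝ)+9) * ∑ k ∈ Finset.range (2*n+3), Tc (n+1) k
      = 4*(4*(n:ℝ)+3)*(4*(n:ℝ)+5) * ∑ k ∈ Finset.range (2*n+3), Tc n k := by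
  have h := Finset.sum_range_sub (fun k => Gc n k) (2*n+3)
  have h2 : ∑ k ∈ Finset.range (2*n+3),
      ((8*(n:ℝ)+7)*(8*(n:ℝ)+9) * Tc (n+1) k - 4*(4*(n:ℝ)+3)*(4*(n:ℝ)+5) * Tc n k) = 0 := by
    calc ∑ k ∈ Finset.range (2*n+3),
        ((8*(n:ℝ)+7)*(8*(n:ℝ)+9) * Tc (n+1) k - 4*(4*(n:ℝ)+3)*(4*(n:ℝ)+5) * Tc n k)
        = ∑ k ∈ Finset.range (2*n+3), (Gc n (k+1) - Gc n k) := by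
          exact Finset.sum_congr rfl (fun k _ => key n k)
      _ = Gc n (2*n+3) - Gc n 0 := h
      _ = 0 := by rw [Gc_top, Gc_zero]; ring
  rw [Finset.sum_sub_distrib, ← Finset.mul_sum, ← Finset.mul_sum] at h2
  linarith

noncomputable def Sc (n : ℕ) : ℝ := ∑ k ∈ Finset.range (2*n+1), Tc n k

lemma Sc_rec (n : ℕ) :
    (8*(n:ℝ)+7)*(8*(n:ℝ)+9) * Sc (n+1) = 4*(4*(n:ℝ)+3)*(4*(n:ℝ)+5) * Sc n := by
  have h := recur n
  have e1 : ∑ k ∈ Finset.range (2*n+3), Tc (n+1) k = Sc (n+1) := by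
    unfold Sc; congr 1
  have e2 : ∑ k ∈ Finset.range (2*n+3), Tc n k = Sc n := by
    unfold Sc
    rw [show 2*n+3 = (2*n+2)+1 from rfl, Finset.sum_range_succ,
      show 2*n+2 = (2*n+1)+1 from rfl, Finset.sum_range_succ,
      Tc_vanish n (2*n+1) (by omega), Tc_vanish n (2*n+2) (by omega)]
    ring
  rw [e1, e2] at h
  exact h

lemma Sc_eq (n : ℕ) :
    Sc n = (poch (3/4) n * poch (5/4) n) / (poch (7/8) n * poch (9/8) n) := by
  induction n with
  | zero =>
    unfold Sc Tc
    norm_num [poch_zero]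
  | succ n ih =>
    have h := Sc_rec n
    rw [ih] at h
    have p3 : 0 < poch (3/4 : ℝ) n := poch_pos (by norm_num) n
    have p5 : 0 < poch (5/4 : ℝ) n := poch_pos (by norm_num) n
    have p7 : 0 < poch (7/8 : ℝ) n := poch_pos (by norm_num) n
    have p9 : 0 < poch (9/8 : ℝ) n := poch_pos (by norm_num) n
    have h' : (8*(n:ℝ)+7)*(8*(n:ℝ)+9) * Sc (n+1) * (poch (7/8) n * poch (9/8) n)
        = 4*(4*(n:ℝ)+3)*(4*(n:ℝ)+5) * (poch (3/4) n * poch (5/4) n) := by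
      rw [h]; field_simp
    have hne : (8*(n:ℝ)+7)*(8*(n:ℝ)+9) ≠ 0 := by positivity
    rw [poch_succ, poch_succ, poch_succ, poch_succ, eq_div_iff (by positivity)]
    apply mul_left_cancel₀ hne
    linear_combination ((7/8+(n:ℝ))*(9/8+(n:ℝ))) * h'

set_option maxHeartbeats 1000000 in
lemma summand_eq (n : ℕ) : ∀ k,
    (-1 : ℝ) ^ k *
      ((((2 * n).choose k : ℝ) * ((2 * n + k + 1).choose k : ℝ)) /
        ((4 * n + 2 * k + 2).choose (2 * k) : ℝ)) *
      (3 + 2 * Real.sqrt 2) ^ k = Tc n k := by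
  have main : ∀ k, k ≤ 2*n → (-1 : ℝ) ^ k *
      ((((2 * n).choose k : ℝ) * ((2 * n + k + 1).choose k : ℝ)) /
        ((4 * n + 2 * k + 2).choose (2 * k) : ℝ)) *
      (3 + 2 * Real.sqrt 2) ^ k = Tc n k := by
    intro k
    induction k with
    | zero =>
      intro _
      unfold Tc
      norm_num [poch_zero]
    | succ k ih =>
      intro hk1
      have hk : k ≤ 2*n := by omega
      set ν := (n:ℝ) with hνd
      set κ := (k:ℝ) with hκd
      have hκ0 : (0:ℝ) ≤ κ := Nat.cast_nonneg k
      have hν0 : (0:ℝ) ≤ ν := Nat.cast_nonneg n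
      have dκ : (κ+1) ≠ 0 := by positivity
      have hc3 : (0:ℝ) < ((4*n+2*k+2).choose (2*k) : ℝ) := by
        exact_mod_cast Nat.choose_pos (by omega)
      have hC0 : poch (2*ν + 3/2) k ≠ 0 := ne_of_gt (poch_pos (by positivity) k)
      have hf0 : ((Nat.factorial k : ℝ)) ≠ 0 := by
        exact_mod_cast (Nat.factorial_pos k).ne'
      have d1 : (2*κ+1) ≠ 0 := by positivity
      have d2 : (2*κ+2) ≠ 0 := by positivity
      have d3 : (4*ν+2*κ+3) ≠ 0 := by positivity
      have d4 : (4*ν+2*κ+4) ≠ 0 := by positivity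
      have d5 : (2*ν+3/2+κ) ≠ 0 := by positivity
      -- choose ratio identities
      have h1 := congrArg (Nat.cast : ℕ → ℝ) (Nat.choose_succ_right_eq (2*n) k)
      push_cast [Nat.cast_sub hk] at h1
      have e1 : (((2*n).choose (k+1) : ℕ) : ℝ) = ((2*n).choose k : ℝ) * (2*ν - κ) / (κ+1) := by
        rw [eq_div_iff dκ]; push_cast; linear_combination h1
      have h2 := congrArg (Nat.cast : ℕ → ℝ) (Nat.add_one_mul_choose_eq (2*n+k+1) k)
      push_cast [Nat.succ_eq_add_one] at h2
      have e2 : (((2*n+(k+1)+1).choose (k+1) : ℕ) : ℝ)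
          = ((2*n+k+1).choose k : ℝ) * (2*ν+κ+2) / (κ+1) := by
        rw [show 2*n+(k+1)+1 = (2*n+k+1)+1 from by omega, eq_div_iff dκ]
        push_cast
        linear_combination -h2
      have a1 := congrArg (Nat.cast : ℕ → ℝ) (Nat.add_one_mul_choose_eq (4*n+2*k+2) (2*k))
      push_cast [Nat.succ_eq_add_one] at a1
      simp only [show 4*n+2*k+2+1 = 4*n+2*k+3 from by omega] at a1
      have a2 := congrArg (Nat.cast : ℕ → ℝ) (Nat.add_one_mul_choose_eq (4*n+2*k+3) (2*k+1))
      push_cast [Nat.succ_eq_add_one] at a2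
      have e3 : (((4*n+2*(k+1)+2).choose (2*(k+1)) : ℕ) : ℝ)
          = ((4*n+2*k+2).choose (2*k) : ℝ) * ((4*ν+2*κ+3)*(4*ν+2*κ+4)) / ((2*κ+1)*(2*κ+2)) := by
        rw [show 4*n+2*(k+1)+2 = (4*n+2*k+3)+1 from by omega,
          show 2*(k+1) = (2*k+1)+1 from by omega,
          eq_div_iff (by positivity)]
        push_cast
        linear_combination -(2*κ+1) * a2 - (4*ν+2*κ+4) * a1
      have hc3' : ((4*n+2*k+2).choose (2*k) : ℝ) ≠ 0 := hc3.ne'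
      have hT : Tc n (k+1) = Tc n k * ((-(2*ν)+κ)*(1/2+κ)*(3 + 2*Real.sqrt 2)) / ((2*ν+3/2+κ)*(κ+1)) := by
        unfold Tc
        rw [poch_succ, poch_succ, poch_succ, pow_succ, Nat.factorial_succ]
        push_cast
        rw [← hνd, ← hκd]
        rw [div_mul_eq_mul_div, div_div, div_eq_div_iff (by positivity) (by positivity)]
        ring
      rw [hT, ← ih hk, e1, e2, e3, pow_succ, pow_succ]
      field_simp
      ring
  intro k
  rcases le_or_gt k (2*n) with h | h
  · exact main k h
  · rw [Tc_vanish n k h, Nat.choose_eq_zero_of_lt (by omega)]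
    norm_num

theorem stmt_0 (n : ℕ) :
    ∑ k ∈ Finset.range (2 * n + 1),
      (-1 : ℝ) ^ k *
        ((((2 * n).choose k : ℝ) * ((2 * n + k + 1).choose k : ℝ)) /
          ((4 * n + 2 * k + 2).choose (2 * k) : ℝ)) *
        (3 + 2 * Real.sqrt 2) ^ k
      = (poch (3 / 4) n * poch (5 / 4) n) / (poch (7 / 8) n * poch (9 / 8) n) := by
  rw [Finset.sum_congr rfl (fun k _ => summand_eq n k)]
  exact Sc_eq n
end

section
/- For every natural number n, the following identity of real numbers holds: ∑_{k=0}^{2n} (−1)^k · (C(2n,k) · C(2n+k+1,k) / C(4n+2k+2,2k)) · (3−2√2)^k = ((3/4)_n · (5/4)_n) / ((7/8)_n · (9/8)_n), where C(m,j) denotes the binomial coefficient. -/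
open Polynomial

namespace Nat

variable {R : Type*} [CommRing R]

/-- Over a ring this holds for every `k`: for `k > m + 1` both binomials vanish. -/
theorem cast_choose_mul_succ (m k : ℕ) :
    (m.choose k : R) * (m + 1) = ((m + 1).choose k : R) * (m + 1 - k) := by
  rcases le_or_gt k (m + 1) with hk | hk
  · have h := congrArg (Nat.cast : ℕ → R) (choose_mul_succ_eq m k)
    push_cast [Nat.cast_sub hk] at h
    exact h
  · simp [choose_eq_zero_of_lt hk, choose_eq_zero_of_lt (show m < k by omega)]

theorem cast_choose_succ_right_mul (m k : ℕ) :
    (m.choose (k + 1) : R) * (k + 1) = (m.choose k : R) * (m - k) := by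
  rcases le_or_gt k m with hk | hk
  · have h := congrArg (Nat.cast : ℕ → R) (choose_succ_right_eq m k)
    push_cast [Nat.cast_sub hk] at h
    exact h
  · simp [choose_eq_zero_of_lt hk, choose_eq_zero_of_lt (show m < k + 1 by omega)]

theorem cast_choose_mul_eval_ascPochhammer (m k j : ℕ) :
    (m.choose k : R) * (ascPochhammer R j).eval ((m : R) + 1) =
      ((m + j).choose k : R) * (ascPochhammer R j).eval ((m : R) + 1 - k) := by
  induction j with
  | zero => simp
  | succ j ih =>
    have h := cast_choose_mul_succ (R := R) (m + j) k
    push_cast at h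
    rw [ascPochhammer_succ_eval, ascPochhammer_succ_eval, ← mul_assoc, ih, ← add_assoc]
    linear_combination (ascPochhammer R j).eval ((m : R) + 1 - k) * h

theorem cast_choose_add_mul_eval_ascPochhammer (m k j : ℕ) :
    ((m + j).choose (k + j) : R) * (ascPochhammer R j).eval ((k : R) + 1) =
      (m.choose k : R) * (ascPochhammer R j).eval ((m : R) + 1) := by
  induction j with
  | zero => simp
  | succ j ih =>
    have h := congrArg (Nat.cast : ℕ → R) (add_one_mul_choose_eq (m + j) (k + j))
    push_cast at h
    rw [ascPochhammer_succ_eval, ascPochhammer_succ_eval, ← add_assoc, ← add_assoc]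
    linear_combination -(ascPochhammer R j).eval ((k : R) + 1) * h + ((m : R) + 1 + j) * ih

end Nat

namespace StrangeEvaluation

noncomputable def summand (m n k : ℕ) : ℝ :=
  (-1 : ℝ) ^ k * (((m.choose k : ℝ) * ((2 * n + k + 1).choose k : ℝ)) /
      ((4 * n + 2 * k + 2).choose (2 * k) : ℝ)) * (3 - 2 * Real.sqrt 2) ^ k

theorem summand_eq_zero_of_lt {m n k : ℕ} (h : m < k) : summand m n k = 0 := by
  simp [summand, Nat.choose_eq_zero_of_lt h]

theorem summand_eq_mul_summand_add_two (m n k : ℕ) :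
    summand m n k = (m + 1 - k) * (m + 2 - k) / ((m + 1) * (m + 2)) * summand (m + 2) n k := by
  have h := Nat.cast_choose_mul_eval_ascPochhammer (R := ℝ) m k 2
  simp only [ascPochhammer_succ_eval, ascPochhammer_zero, eval_one] at h
  push_cast at h
  have hm : (m.choose k : ℝ) =
      (m + 2).choose k * ((m + 1 - k) * (m + 2 - k)) / ((m + 1) * (m + 2)) := by
    rw [eq_div_iff (by positivity)]
    linear_combination h
  rw [summand, hm, summand]
  field_simp

theorem summand_succ_left (m n k : ℕ) :
    summand m (n + 1) k =
      (2 * n + k + 2) * (2 * n + k + 3) * ((4 * n + 3) * (4 * n + 4) * (4 * n + 5) * (4 * n + 6)) /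
        ((2 * n + 2) * (2 * n + 3) *
          ((4 * n + 2 * k + 3) * (4 * n + 2 * k + 4) * (4 * n + 2 * k + 5) * (4 * n + 2 * k + 6)))
        * summand m n k := by
  have h2 := Nat.cast_choose_mul_eval_ascPochhammer (R := ℝ) (2 * n + k + 1) k 2
  have h4 := Nat.cast_choose_mul_eval_ascPochhammer (R := ℝ) (4 * n + 2 * k + 2) (2 * k) 4
  simp only [ascPochhammer_succ_eval, ascPochhammer_zero, eval_one] at h2 h4
  push_cast at h2 h4
  have hc2 : ((2 * (n + 1) + k + 1).choose k : ℝ) = (2 * n + k + 1).choose k *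
      ((2 * n + k + 2) * (2 * n + k + 3)) / ((2 * n + 2) * (2 * n + 3)) := by
    rw [eq_div_iff (by positivity), show 2 * (n + 1) + k + 1 = 2 * n + k + 1 + 2 by ring]
    linear_combination -h2
  have hc4 : ((4 * (n + 1) + 2 * k + 2).choose (2 * k) : ℝ) = (4 * n + 2 * k + 2).choose (2 * k) *
      ((4 * n + 2 * k + 3) * (4 * n + 2 * k + 4) * (4 * n + 2 * k + 5) * (4 * n + 2 * k + 6)) /
        ((4 * n + 3) * (4 * n + 4) * (4 * n + 5) * (4 * n + 6)) := by
    rw [eq_div_iff (by positivity), show 4 * (n + 1) + 2 * k + 2 = 4 * n + 2 * k + 2 + 4 by ring]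
    linear_combination -h4
  rw [summand, hc2, hc4, summand]
  field_simp

theorem summand_succ_right (m n k : ℕ) :
    summand m n (k + 1) =
      -(3 - 2 * Real.sqrt 2) * ((m - k) * (2 * n + k + 2) * (2 * k + 1) * (2 * k + 2) /
        ((k + 1) ^ 2 * (4 * n + 2 * k + 3) * (4 * n + 2 * k + 4))) * summand m n k := by
  have h1 := Nat.cast_choose_succ_right_mul (R := ℝ) m k
  have h2 := Nat.cast_choose_add_mul_eval_ascPochhammer (R := ℝ) (2 * n + k + 1) k 1
  have h3 := Nat.cast_choose_add_mul_eval_ascPochhammer (R := ℝ) (4 * n + 2 * k + 2) (2 * k) 2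
  simp only [ascPochhammer_succ_eval, ascPochhammer_zero, eval_one] at h2 h3
  push_cast at h2 h3
  have hc1 : (m.choose (k + 1) : ℝ) = m.choose k * (m - k) / (k + 1) :=
    eq_div_of_mul_eq (by positivity) h1
  have hc2 : ((2 * n + (k + 1) + 1).choose (k + 1) : ℝ) =
      (2 * n + k + 1).choose k * (2 * n + k + 2) / (k + 1) := by
    rw [eq_div_iff (by positivity), show 2 * n + (k + 1) + 1 = 2 * n + k + 1 + 1 by ring]
    linear_combination h2
  have hc3 : ((4 * n + 2 * (k + 1) + 2).choose (2 * (k + 1)) : ℝ) =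
      (4 * n + 2 * k + 2).choose (2 * k) * ((4 * n + 2 * k + 3) * (4 * n + 2 * k + 4)) /
        ((2 * k + 1) * (2 * k + 2)) := by
    rw [eq_div_iff (by positivity), show 4 * n + 2 * (k + 1) + 2 = 4 * n + 2 * k + 2 + 2 by ring,
      show 2 * (k + 1) = 2 * k + 2 by ring]
    linear_combination h3
  rw [summand, hc1, hc2, hc3, summand]
  field_simp
  ring

noncomputable def certRatio (s N K : ℝ) : ℝ :=
  (4 * N + 3) * (4 * N + 5) * K *
      ((4 * K ^ 2 - 2 * (8 * N + 5) * K - (2 * N + 3)) +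
        s * (4 * K ^ 2 - 2 * (4 * N + 3) * K - 4 * (N + 1))) /
    (64 * (2 * N + 1) * (2 * N + 2) * (4 * N + 2 * K + 3))

theorem certRatio_succ_sub {s N K : ℝ} (hs : s * s = 2) (hN : 0 ≤ N) (hK : 0 ≤ K) :
    -(3 - 2 * s) * ((2 * N + 2 - K) * (2 * N + K + 2) * (2 * K + 1) * (2 * K + 2) /
          ((K + 1) ^ 2 * (4 * N + 2 * K + 3) * (4 * N + 2 * K + 4))) * certRatio s N (K + 1)
        - certRatio s N K
      = (8 * N + 7) * (8 * N + 9) / 64 *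
          ((2 * N + K + 2) * (2 * N + K + 3) *
              ((4 * N + 3) * (4 * N + 4) * (4 * N + 5) * (4 * N + 6)) /
            ((2 * N + 2) * (2 * N + 3) *
              ((4 * N + 2 * K + 3) * (4 * N + 2 * K + 4) *
                (4 * N + 2 * K + 5) * (4 * N + 2 * K + 6))))
        - (4 * N + 3) * (4 * N + 5) / 16 *
          ((2 * N + 1 - K) * (2 * N + 2 - K) / ((2 * N + 1) * (2 * N + 2))) := by
  unfold certRatio
  -- the coefficient of `s * s` on the left, coming from `(3 - 2s) · s`
  linear_combination (norm := skip)
    2 * ((2 * N + 2 - K) * (2 * N + K + 2) * (2 * K + 1) * (2 * K + 2) /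
        ((K + 1) ^ 2 * (4 * N + 2 * K + 3) * (4 * N + 2 * K + 4))) *
      ((4 * N + 3) * (4 * N + 5) * (K + 1) *
          (4 * (K + 1) ^ 2 - 2 * (4 * N + 3) * (K + 1) - 4 * (N + 1)) /
        (64 * (2 * N + 1) * (2 * N + 2) * (4 * N + 2 * (K + 1) + 3))) * hs
  field_simp
  ring

noncomputable def cert (n k : ℕ) : ℝ := certRatio (Real.sqrt 2) n k * summand (2 * n + 2) n k

theorem cert_succ_sub (n k : ℕ) :
    cert n (k + 1) - cert n k =
      (8 * n + 7) * (8 * n + 9) / 64 * summand (2 * (n + 1)) (n + 1) k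
        - (4 * n + 3) * (4 * n + 5) / 16 * summand (2 * n) n k := by
  have key := certRatio_succ_sub (Real.mul_self_sqrt zero_le_two) n.cast_nonneg k.cast_nonneg
  rw [cert, cert, summand_succ_right, show 2 * (n + 1) = 2 * n + 2 by ring, summand_succ_left,
    summand_eq_mul_summand_add_two (2 * n)]
  push_cast
  linear_combination summand (2 * n + 2) n k * key

theorem sum_summand_succ (n : ℕ) :
    (8 * n + 7) * (8 * n + 9) / 64 *
        ∑ k ∈ Finset.range (2 * (n + 1) + 1), summand (2 * (n + 1)) (n + 1) k
      = (4 * n + 3) * (4 * n + 5) / 16 *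
          ∑ k ∈ Finset.range (2 * n + 1), summand (2 * n) n k := by
  have htele := Finset.sum_range_sub (cert n) (2 * n + 3)
  have hbot : cert n 0 = 0 := by simp [cert, certRatio]
  have htop : cert n (2 * n + 3) = 0 := by
    simp [cert, summand_eq_zero_of_lt (show 2 * n + 2 < 2 * n + 3 by omega)]
  have htrunc : ∑ k ∈ Finset.range (2 * n + 3), summand (2 * n) n k =
      ∑ k ∈ Finset.range (2 * n + 1), summand (2 * n) n k := by
    refine (Finset.sum_subset (Finset.range_subset_range.mpr (by omega)) fun k _ hk => ?_).symm
    exact summand_eq_zero_of_lt (by simp at hk; omega)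
  simp only [cert_succ_sub, Finset.sum_sub_distrib, ← Finset.mul_sum, hbot, htop, htrunc] at htele
  rw [show 2 * (n + 1) + 1 = 2 * n + 3 by ring]
  linear_combination htele

end StrangeEvaluation

theorem stmt_1 (n : ℕ) :
    ∑ k ∈ Finset.range (2 * n + 1),
      (-1 : ℝ) ^ k *
        ((((2 * n).choose k : ℝ) * ((2 * n + k + 1).choose k : ℝ)) /
          ((4 * n + 2 * k + 2).choose (2 * k) : ℝ)) *
        (3 - 2 * Real.sqrt 2) ^ k
      = (poch (3 / 4) n * poch (5 / 4) n) / (poch (7 / 8) n * poch (9 / 8) n) := by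
  change ∑ k ∈ Finset.range (2 * n + 1), StrangeEvaluation.summand (2 * n) n k = _
  induction n with
  | zero => norm_num [StrangeEvaluation.summand, poch]
  | succ n ih =>
    have hrec := StrangeEvaluation.sum_summand_succ n
    rw [ih] at hrec
    apply mul_left_cancel₀ (show (8 * (n : ℝ) + 7) * (8 * n + 9) / 64 ≠ 0 by positivity)
    rw [hrec]
    simp only [poch, ascPochhammer_succ_eval]
    field_simp
    ring
end

section
/- Define, for each natural number n, the real number S(n) = ∑_{k=0}^{2n} (−1)^k · (C(2n,k) · C(2n+k+1,k) / C(4n+2k+2,2k)) · (3+2√2)^k. Then for every natural number n, S satisfies the first-order recurrence −(8n+9)(8n+7) · S(n+1) + 4 · (4n+5)(4n+3) · S(n) = 0. -/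
noncomputable def cc (m k : ℕ) : ℝ :=
  (-1)^k * (((2*m).choose k : ℝ) * ((2*m+k+1).choose k : ℝ)) / ((4*m+2*k+2).choose (2*k) : ℝ)

lemma cc_zero (m k : ℕ) (h : 2*m < k) : cc m k = 0 := by
  simp [cc, Nat.choose_eq_zero_of_lt h]

lemma cc_rec (m k : ℕ) :
    ((k:ℝ)+1) * (4*(m:ℝ)+2*(k:ℝ)+3) * cc m (k+1)
      = -((2*(m:ℝ)) - k) * (2*(k:ℝ)+1) * cc m k := by
  rcases lt_trichotomy k (2*m) with hk | hk | hk
  · -- main case k < 2m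
    have hk' : k + 1 ≤ 2*m := hk
    -- index normalizations
    have i1 : 4*m+2*(k+1)+2 = 4*m+2*k+4 := by ring
    have i2 : 2*(k+1) = 2*k+2 := by ring
    have i3 : 2*m+(k+1)+1 = 2*m+k+2 := by ring
    -- choose positivity
    have p3 : 0 < (4*m+2*k+2).choose (2*k) := Nat.choose_pos (by omega)
    have p3' : 0 < (4*m+2*k+4).choose (2*k+2) := Nat.choose_pos (by omega)
    have hk1 : ((k:ℝ)+1) ≠ 0 := by positivity
    have h2k1 : (2*(k:ℝ)+1) ≠ 0 := by positivity
    have h2k2 : (2*(k:ℝ)+2) ≠ 0 := by positivity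
    -- nat relations
    have r1 : (2*m).choose (k+1) * (k+1) = (2*m).choose k * (2*m - k) :=
      Nat.choose_succ_right_eq (2*m) k
    have r2 : (2*m+k+2) * ((2*m+k+1).choose k) = (2*m+k+2).choose (k+1) * (k+1) :=
      Nat.add_one_mul_choose_eq (2*m+k+1) k
    have r3 : (4*m+2*k+4) * ((4*m+2*k+3).choose (2*k+1)) = (4*m+2*k+4).choose (2*k+2) * (2*k+2) :=
      Nat.add_one_mul_choose_eq (4*m+2*k+3) (2*k+1)
    have r4 : (4*m+2*k+3) * ((4*m+2*k+2).choose (2*k)) = (4*m+2*k+3).choose (2*k+1) * (2*k+1) :=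
      Nat.add_one_mul_choose_eq (4*m+2*k+2) (2*k)
    -- cast relations
    have hsub : ((2*m - k : ℕ) : ℝ) = 2*(m:ℝ) - k := by
      push_cast [Nat.cast_sub hk.le]; ring
    have c1 : ((2*m).choose (k+1) : ℝ) = (2*(m:ℝ) - k) * ((2*m).choose k) / ((k:ℝ)+1) := by
      rw [eq_div_iff hk1]
      have := congrArg (Nat.cast : ℕ → ℝ) r1
      push_cast at this
      rw [hsub] at this
      linarith [this]
    have c2 : ((2*m+k+2).choose (k+1) : ℝ)
        = (2*(m:ℝ)+k+2) * ((2*m+k+1).choose k) / ((k:ℝ)+1) := by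
      rw [eq_div_iff hk1]
      have := congrArg (Nat.cast : ℕ → ℝ) r2
      push_cast at this
      linarith [this]
    have c3 : ((4*m+2*k+4).choose (2*k+2) : ℝ)
        = (4*(m:ℝ)+2*k+4) * (4*(m:ℝ)+2*k+3) * ((4*m+2*k+2).choose (2*k))
            / ((2*(k:ℝ)+2) * (2*(k:ℝ)+1)) := by
      rw [eq_div_iff (by positivity)]
      have h3 := congrArg (Nat.cast : ℕ → ℝ) r3
      have h4 := congrArg (Nat.cast : ℕ → ℝ) r4
      push_cast at h3 h4
      nlinarith [h3, h4]
    unfold cc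
    rw [i1, i2, i3, c1, c2, c3, pow_succ]
    have hp3 : ((4*m+2*k+2).choose (2*k) : ℝ) ≠ 0 := by positivity
    field_simp
    ring
  · -- k = 2m
    subst hk
    rw [cc_zero m (2*m+1) (by omega)]
    have : -((2*(m:ℝ)) - (2*m:ℕ)) = 0 := by push_cast; ring
    rw [this]
    ring
  · -- k > 2m
    rw [cc_zero m (k+1) (by omega), cc_zero m k (by omega)]
    ring

lemma cc_one (m : ℕ) : cc m 0 = 1 := by
  simp [cc]

lemma cc_shift (n : ℕ) : ∀ k : ℕ,
    ((2*(n:ℝ)+2)*(2*(n:ℝ)+1)*(4*(n:ℝ)+3)*(4*(n:ℝ)+5)) * cc n k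
      = ((2*(n:ℝ)+2)-k)*((2*(n:ℝ)+1)-k)*(4*(n:ℝ)+2*k+3)*(4*(n:ℝ)+2*k+5) * cc (n+1) k := by
  intro k
  induction k with
  | zero => rw [cc_one, cc_one]; push_cast; ring
  | succ k ih =>
    have e1 := cc_rec n k
    have e2 := cc_rec (n+1) k
    push_cast at e2
    have hk1 : ((k:ℝ)+1) ≠ 0 := by positivity
    have d1 : (4*(n:ℝ)+2*k+3) ≠ 0 := by positivity
    have d2 : (4*((n:ℝ)+1)+2*k+3) ≠ 0 := by positivity
    have hA : cc n (k+1) = -((2*(n:ℝ)) - k) * (2*(k:ℝ)+1) * cc n k / (((k:ℝ)+1) * (4*(n:ℝ)+2*k+3)) := by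
      rw [eq_div_iff (by positivity)]
      linarith [e1]
    have hB : cc (n+1) (k+1)
        = -((2*((n:ℝ)+1)) - k) * (2*(k:ℝ)+1) * cc (n+1) k / (((k:ℝ)+1) * (4*((n:ℝ)+1)+2*k+3)) := by
      rw [eq_div_iff (by positivity)]
      linarith [e2]
    have hD : ((2*(n:ℝ)+2)*(2*(n:ℝ)+1)*(4*(n:ℝ)+3)*(4*(n:ℝ)+5)) ≠ 0 := by positivity
    have hcn : cc n k = ((2*(n:ℝ)+2)-k)*((2*(n:ℝ)+1)-k)*(4*(n:ℝ)+2*k+3)*(4*(n:ℝ)+2*k+5) * cc (n+1) k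
        / ((2*(n:ℝ)+2)*(2*(n:ℝ)+1)*(4*(n:ℝ)+3)*(4*(n:ℝ)+5)) := by
      rw [eq_div_iff hD]
      linarith [ih]
    rw [hA, hB, hcn]
    push_cast
    field_simp
    ring

noncomputable def Tn (n k : ℕ) : ℝ :=
  -(2*(k:ℝ)+1)*(2*(k:ℝ)+3)*((2*(n:ℝ)+2)-k)*((2*(n:ℝ)+1)-k)

lemma cert (n k : ℕ) :
    (2*(n:ℝ)+2)*(2*(n:ℝ)+1) *
      ( -((8*(n:ℝ)+9)*(8*(n:ℝ)+7)) * cc (n+1) (k+2)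
        + 4*((4*(n:ℝ)+5)*(4*(n:ℝ)+3)) * cc n (k+2) )
    = Tn n (k+2) * cc (n+1) (k+2) - 6 * Tn n (k+1) * cc (n+1) (k+1) + Tn n k * cc (n+1) k := by
  have e1 := cc_rec (n+1) k
  have e2 := cc_rec (n+1) (k+1)
  have hix : k+1+1 = k+2 := by omega
  rw [hix] at e2
  push_cast at e1 e2
  have hu1 : cc (n+1) (k+1)
      = -((2*((n:ℝ)+1)) - k) * (2*(k:ℝ)+1) * cc (n+1) k / (((k:ℝ)+1) * (4*((n:ℝ)+1)+2*k+3)) := by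
    rw [eq_div_iff (by positivity)]; linarith [e1]
  have hu2 : cc (n+1) (k+2)
      = -((2*((n:ℝ)+1)) - (k+1)) * (2*((k:ℝ)+1)+1) * cc (n+1) (k+1) / ((((k:ℝ)+1)+1) * (4*((n:ℝ)+1)+2*((k:ℝ)+1)+3)) := by
    rw [eq_div_iff (by positivity)]; linarith [e2]
  have hD : ((2*(n:ℝ)+2)*(2*(n:ℝ)+1)*(4*(n:ℝ)+3)*(4*(n:ℝ)+5)) ≠ 0 := by positivity
  have sh := cc_shift n (k+2)
  push_cast at sh
  have hc : cc n (k+2)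
      = ((2*(n:ℝ)+2)-((k:ℝ)+2))*((2*(n:ℝ)+1)-((k:ℝ)+2))*(4*(n:ℝ)+2*((k:ℝ)+2)+3)*(4*(n:ℝ)+2*((k:ℝ)+2)+5) * cc (n+1) (k+2)
        / ((2*(n:ℝ)+2)*(2*(n:ℝ)+1)*(4*(n:ℝ)+3)*(4*(n:ℝ)+5)) := by
    rw [eq_div_iff hD]; linarith [sh]
  rw [hc, hu2, hu1]
  unfold Tn
  push_cast
  field_simp
  ring

lemma cert0 (n : ℕ) :
    (2*(n:ℝ)+2)*(2*(n:ℝ)+1) *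
      ( -((8*(n:ℝ)+9)*(8*(n:ℝ)+7)) * cc (n+1) 0
        + 4*((4*(n:ℝ)+5)*(4*(n:ℝ)+3)) * cc n 0 )
    = Tn n 0 * cc (n+1) 0 := by
  rw [cc_one, cc_one]; unfold Tn; push_cast; ring

lemma cert1 (n : ℕ) :
    (2*(n:ℝ)+2)*(2*(n:ℝ)+1) *
      ( -((8*(n:ℝ)+9)*(8*(n:ℝ)+7)) * cc (n+1) 1
        + 4*((4*(n:ℝ)+5)*(4*(n:ℝ)+3)) * cc n 1 )
    = Tn n 1 * cc (n+1) 1 - 6 * Tn n 0 * cc (n+1) 0 := by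
  have e1 := cc_rec (n+1) 0
  have e0 := cc_rec n 0
  rw [cc_one] at e1 e0
  push_cast at e1 e0
  have hu1 : cc (n+1) 1 = -((2*((n:ℝ)+1))) * 1 / (1 * (4*((n:ℝ)+1)+3)) := by
    rw [eq_div_iff (by positivity)]; linarith [e1]
  have hc1 : cc n 1 = -((2*(n:ℝ))) * 1 / (1 * (4*(n:ℝ)+3)) := by
    rw [eq_div_iff (by positivity)]; linarith [e0]
  rw [hu1, hc1, cc_one]
  unfold Tn
  push_cast
  field_simp
  ring

lemma telesc (x : ℝ) (hx : x^2 = 6*x - 1) (L Q : ℕ → ℝ)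
    (h0 : L 0 = Q 0) (h1 : L 1 = Q 1 - 6 * Q 0)
    (hstep : ∀ k, L (k+2) = Q (k+2) - 6 * Q (k+1) + Q k) :
    ∀ N, ∑ k ∈ Finset.range (N+2), L k * x^k
      = 6*Q (N+1)*x^(N+2) - Q (N+1)*x^(N+3) - Q N * x^(N+2) := by
  intro N
  induction N with
  | zero =>
    rw [Finset.sum_range_succ, Finset.sum_range_one, h0, h1]
    linear_combination (Q 1 * x + Q 0) * hx
  | succ N ih =>
    have hix : N+1+2 = (N+2)+1 := by omega
    rw [hix, Finset.sum_range_succ, ih, hstep N]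
    have h3 : x^(N+3) = x^(N+2) * x := by ring
    have h4 : x^(N+1+3) = x^(N+2) * x^2 := by ring
    have h5 : x^(N+1+2) = x^(N+2) * x := by ring
    rw [h4, h5]
    linear_combination (x^(N+2) * Q (N+2)) * hx

theorem stmt_2 (S : ℕ → ℝ)
    (hS : ∀ n : ℕ, S n = ∑ k ∈ Finset.range (2 * n + 1),
      (-1 : ℝ) ^ k *
        ((((2 * n).choose k : ℝ) * ((2 * n + k + 1).choose k : ℝ)) /
          ((4 * n + 2 * k + 2).choose (2 * k) : ℝ)) *
        (3 + 2 * Real.sqrt 2) ^ k) :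
    ∀ n : ℕ, -((8 * (n : ℝ) + 9) * (8 * (n : ℝ) + 7)) * S (n + 1)
      + 4 * ((4 * (n : ℝ) + 5) * (4 * (n : ℝ) + 3)) * S n = 0 := by
  intro n
  set x : ℝ := 3 + 2 * Real.sqrt 2 with hxdef
  have hx : x^2 = 6*x - 1 := by
    have h2 : Real.sqrt 2 ^ 2 = 2 := Real.sq_sqrt (by norm_num)
    rw [hxdef]; nlinarith [h2]
  have hterm : ∀ m : ℕ, S m = ∑ k ∈ Finset.range (2*m+1), cc m k * x^k := by
    intro m
    rw [hS m]
    refine Finset.sum_congr rfl fun k _ => ?_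
    unfold cc
    ring
  have hz1 : cc n (2*n+1) = 0 := cc_zero n _ (by omega)
  have hz2 : cc n (2*n+1+1) = 0 := cc_zero n _ (by omega)
  have hsplit : ∑ k ∈ Finset.range (2*n+3), cc n k * x^k
      = ∑ k ∈ Finset.range (2*n+1), cc n k * x^k := by
    rw [show 2*n+3 = (2*n+1+1)+1 from by omega]
    rw [Finset.sum_range_succ (f := fun k => cc n k * x^k) (n := 2*n+1+1)]
    rw [Finset.sum_range_succ (f := fun k => cc n k * x^k) (n := 2*n+1)]
    rw [hz1, hz2]
    ring
  have hs0 : S n = ∑ k ∈ Finset.range (2*n+3), cc n k * x^k := by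
    rw [hterm n, hsplit]
  have hs1 : S (n+1) = ∑ k ∈ Finset.range (2*n+3), cc (n+1) k * x^k := by
    rw [hterm (n+1), show 2*(n+1)+1 = 2*n+3 from by omega]
  have hDne : ((2*(n:ℝ)+2)*(2*(n:ℝ)+1)) ≠ 0 := by positivity
  have mainsum := telesc x hx
      (fun k => ((2*(n:ℝ)+2)*(2*(n:ℝ)+1)) *
        (-((8*(n:ℝ)+9)*(8*(n:ℝ)+7)) * cc (n+1) k + 4*((4*(n:ℝ)+5)*(4*(n:ℝ)+3)) * cc n k))
      (fun k => Tn n k * cc (n+1) k)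
      (by linear_combination cert0 n)
      (by linear_combination cert1 n)
      (fun k => by linear_combination cert n k)
      (2*n+1)
  have hQ1 : Tn n (2*n+1) = 0 := by unfold Tn; push_cast; ring
  have hQ2 : Tn n (2*n+1+1) = 0 := by unfold Tn; push_cast; ring
  simp only [show 2*n+1+2 = 2*n+3 from by omega] at mainsum
  have expand : ((2*(n:ℝ)+2)*(2*(n:ℝ)+1)) *
      (-((8*(n:ℝ)+9)*(8*(n:ℝ)+7)) * S (n+1) + 4*((4*(n:ℝ)+5)*(4*(n:ℝ)+3)) * S n)
      = ∑ k ∈ Finset.range (2*n+3),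
          (((2*(n:ℝ)+2)*(2*(n:ℝ)+1)) *
            (-((8*(n:ℝ)+9)*(8*(n:ℝ)+7)) * cc (n+1) k
              + 4*((4*(n:ℝ)+5)*(4*(n:ℝ)+3)) * cc n k)) * x^k := by
    rw [hs0, hs1]
    simp only [mul_add, Finset.mul_sum, ← Finset.sum_add_distrib]
    refine Finset.sum_congr rfl fun k _ => ?_
    ring
  have final : ((2*(n:ℝ)+2)*(2*(n:ℝ)+1)) *
      (-((8*(n:ℝ)+9)*(8*(n:ℝ)+7)) * S (n+1) + 4*((4*(n:ℝ)+5)*(4*(n:ℝ)+3)) * S n) = 0 := by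
    rw [expand, mainsum]
    simp [hQ1, hQ2]
  exact (mul_eq_zero.mp final).resolve_left hDne
end
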